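/- arXiv:2405.03414 — 8 statements merged into one kernel-verified Lean document; each statement's English description precedes it below -/
import Mathlib

section
/- (Increment bound) For every λ > 0, every x ∈ ℝ^d, and every z ∈ ℝ^d, writing x⁺ = x − λG_λ(x), one has F(x⁺) − F(z) ≤ ⟨x⁺ − x, ∇f(x⁺) − ∇f(x) + (1/2)G_λ(x)⟩ − (1/(2λ))‖x⁺ − x‖² − (1/λ)⟨x⁺ − x, x − z⟩. -/
open RealInnerProductSpace


lemma convex_grad_ineq {d : ℕ} (f : EuclideanSpace ℝ (Fin d) → ℝ)
    (hf_conv : ConvexOn ℝ Set.univ f) (hf_diff : Differentiable ℝ f)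
    (a b : EuclideanSpace ℝ (Fin d)) :
    f a + ⟪gradient f a, b - a⟫ ≤ f b := by
  set φ : ℝ → ℝ := fun t => f (a + t • (b - a)) with hφdef
  have hline : HasDerivAt (fun t : ℝ => a + t • (b - a)) (b - a) 0 := by
    simpa using ((hasDerivAt_id (0:ℝ)).smul_const (b - a)).const_add a
  have hgrad : HasFDerivAt f (InnerProductSpace.toDual ℝ _ (gradient f a))
      ((fun t : ℝ => a + t • (b - a)) 0) := by
    simpa using hasGradientAt_iff_hasFDerivAt.mp (hf_diff a).hasGradientAt
  have hφ' : HasDerivAt φ ⟪gradient f a, b - a⟫ 0 := by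
    exact hgrad.comp_hasDerivAt 0 hline
  rw [hasDerivAt_iff_tendsto_slope] at hφ'
  have hmono : (nhdsWithin (0:ℝ) (Set.Ioi 0)) ≤ nhdsWithin 0 {(0:ℝ)}ᶜ :=
    nhdsWithin_mono 0 (fun t ht => ne_of_gt ht)
  have htend := hφ'.mono_left hmono
  have hbound : ∀ᶠ t in nhdsWithin (0:ℝ) (Set.Ioi 0), slope φ 0 t ≤ f b - f a := by
    filter_upwards [Ioc_mem_nhdsGT_of_mem (Set.mem_Ico.mpr ⟨le_refl 0, one_pos⟩)] with t ht
    obtain ⟨ht0, ht1⟩ := ht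
    have hconv := hf_conv.2 (Set.mem_univ a) (Set.mem_univ b)
      (by linarith : (0:ℝ) ≤ 1 - t) (le_of_lt ht0) (by ring)
    have hpt : a + t • (b - a) = (1 - t) • a + t • b := by module
    have hφt : φ t ≤ (1 - t) * f a + t * f b := by
      rw [hφdef]; simp only; rw [hpt]; exact hconv
    have : slope φ 0 t = (φ t - φ 0) / t := by simp [slope_def_field]
    rw [this]
    rw [div_le_iff₀ ht0]
    have hφ0 : φ 0 = f a := by simp [hφdef]
    rw [hφ0]; nlinarith
  have := le_of_tendsto htend hbound
  linarith


lemma prox_subgrad {d : ℕ} (h : EuclideanSpace ℝ (Fin d) → ℝ)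
    (hh_conv : ConvexOn ℝ Set.univ h) (lam : ℝ) (hlam : 0 < lam)
    (y p : EuclideanSpace ℝ (Fin d))
    (hp : ∀ u, h p + (1 / (2 * lam)) * ‖p - y‖ ^ 2 ≤
          h u + (1 / (2 * lam)) * ‖u - y‖ ^ 2) :
    ∀ u, h p + (1 / lam) * ⟪y - p, u - p⟫ ≤ h u := by
  intro u
  set I : ℝ := ⟪p - y, u - p⟫ with hI
  set N : ℝ := ‖u - p‖ ^ 2 with hN
  have hN0 : 0 ≤ N := by positivity
  have hip : ⟪y - p, u - p⟫ = -I := by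
    rw [hI, show y - p = -(p - y) by abel, inner_neg_left]
  set A : ℝ := h u - h p + (1 / lam) * I with hA
  set C : ℝ := N / (2 * lam) with hC
  have hC0 : 0 ≤ C := by positivity
  have key : ∀ t : ℝ, 0 < t → t ≤ 1 → -A ≤ t * N / (2 * lam) := by
    intro t ht0 ht1
    have h1 := hp (p + t • (u - p))
    have hconv := hh_conv.2 (Set.mem_univ p) (Set.mem_univ u)
      (by linarith : (0:ℝ) ≤ 1 - t) (le_of_lt ht0) (by ring)
    have hpt : p + t • (u - p) = (1 - t) • p + t • u := by module
    have hht : h (p + t • (u - p)) ≤ (1 - t) * h p + t * h u := by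
      rw [hpt]; exact hconv
    have hnorm : ‖p + t • (u - p) - y‖ ^ 2
        = ‖p - y‖ ^ 2 + 2 * t * I + t ^ 2 * N := by
      have e : p + t • (u - p) - y = (p - y) + t • (u - p) := by abel
      rw [e, norm_add_sq_real, real_inner_smul_right, norm_smul]
      simp [mul_pow, sq_abs, hI, hN]
      ring
    rw [hnorm] at h1
    have h2 : 0 ≤ t * (h u - h p) + (1 / (2 * lam)) * (2 * t * I + t ^ 2 * N) := by
      nlinarith [h1, hht]
    have e2 : t * (h u - h p) + (1 / (2 * lam)) * (2 * t * I + t ^ 2 * N)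
        = t * ((h u - h p) + (1 / lam) * I + t * N / (2 * lam)) := by
      field_simp; ring
    rw [e2] at h2
    have h3 : 0 ≤ (h u - h p) + (1 / lam) * I + t * N / (2 * lam) :=
      nonneg_of_mul_nonneg_right h2 ht0
    rw [hA]; linarith
  have hA0 : -A ≤ 0 := by
    refine le_of_forall_pos_le_add (fun ε hε => ?_)
    set t : ℝ := min 1 (ε / (C + 1)) with htdef
    have ht0 : 0 < t := lt_min one_pos (by positivity)
    have ht := key t ht0 (min_le_left _ _)
    have htN : t * N / (2 * lam) = t * C := by rw [hC]; ring
    rw [htN] at ht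
    have h1 : t ≤ ε / (C + 1) := min_le_right _ _
    have h2 : (0:ℝ) < C + 1 := by linarith
    have h3 : t * C ≤ ε := by
      have := mul_le_mul_of_nonneg_right h1 hC0
      have h4 : ε / (C + 1) * C ≤ ε := by
        rw [div_mul_eq_mul_div, div_le_iff₀ h2]; nlinarith
      linarith
    linarith
  rw [hip]
  have : (1 / lam) * (-I) = -((1 / lam) * I) := by ring
  rw [this]
  rw [hA] at hA0
  linarith

/-- Increment bound: For every λ > 0, every x ∈ ℝ^d, and every z ∈ ℝ^d,
writing x⁺ = x − λG_λ(x), one has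
F(x⁺) − F(z) ≤ ⟨x⁺ − x, ∇f(x⁺) − ∇f(x) + (1/2)G_λ(x)⟩ − (1/(2λ))‖x⁺ − x‖²
− (1/λ)⟨x⁺ − x, x − z⟩, where F = f + h and
G_λ(x) = (1/λ)(x − prox_{λh}(x − λ∇f(x))). -/
theorem stmt_3 {d : ℕ} (f h : EuclideanSpace ℝ (Fin d) → ℝ)
    (hf_conv : ConvexOn ℝ Set.univ f) (hf_diff : Differentiable ℝ f)
    (hh_conv : ConvexOn ℝ Set.univ h)
    (lam : ℝ) (hlam : 0 < lam)
    (x p G xplus : EuclideanSpace ℝ (Fin d))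
    (hp : ∀ u, h p + (1 / (2 * lam)) * ‖p - (x - lam • gradient f x)‖ ^ 2 ≤
          h u + (1 / (2 * lam)) * ‖u - (x - lam • gradient f x)‖ ^ 2)
    (hG : G = lam⁻¹ • (x - p))
    (hxplus : xplus = x - lam • G) :
    ∀ z, (f xplus + h xplus) - (f z + h z) ≤
      ⟪xplus - x, gradient f xplus - gradient f x + (1 / 2 : ℝ) • G⟫
      - (1 / (2 * lam)) * ‖xplus - x‖ ^ 2 - (1 / lam) * ⟪xplus - x, x - z⟫ := by
  intro z
  have hlamne : lam ≠ 0 := ne_of_gt hlam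
  have hxp : xplus = p := by
    rw [hxplus, hG, smul_smul, mul_inv_cancel₀ hlamne, one_smul, sub_sub_cancel]
  subst hxp
  have hxmp : x - xplus = lam • G := by
    rw [hG, smul_smul, mul_inv_cancel₀ hlamne, one_smul]
  have hpx : xplus - x = -(lam • G) := by rw [← hxmp]; abel
  set g1 := gradient f xplus with hg1
  set g2 := gradient f x with hg2
  set w := x - z with hw
  set a : ℝ := ⟪g1, G⟫ with ha
  set b : ℝ := ⟪g2, G⟫ with hb
  set c : ℝ := ⟪G, G⟫ with hc
  set r : ℝ := ⟪G, w⟫ with hr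
  set s : ℝ := ⟪g2, w⟫ with hs
  have hgf1 := convex_grad_ineq f hf_conv hf_diff xplus x
  have hgf2 := convex_grad_ineq f hf_conv hf_diff x z
  have hsub := prox_subgrad h hh_conv lam hlam (x - lam • g2) xplus hp z
  have E1 : ⟪g1, x - xplus⟫ = lam * a := by
    rw [hxmp, real_inner_smul_right, ha]
  have E2 : ⟪g2, z - x⟫ = -s := by
    rw [show z - x = -w by rw [hw]; abel, inner_neg_right, hs]
  have E3 : (x - lam • g2) - xplus = lam • (G - g2) := by
    rw [show (x - lam • g2) - xplus = (x - xplus) - lam • g2 by abel, hxmp, ← smul_sub]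
  have ez : z - xplus = lam • G - w := by rw [← hxmp, hw]; abel
  have E4 : (1 / lam) * ⟪(x - lam • g2) - xplus, z - xplus⟫
      = lam * c - r - lam * b + s := by
    rw [E3, ez]
    simp only [inner_sub_left, inner_sub_right, real_inner_smul_left, real_inner_smul_right]
    rw [hb, hc, hr, hs]
    field_simp
    ring
  rw [E1] at hgf1
  rw [E2] at hgf2
  rw [E4] at hsub
  have ER1 : ⟪xplus - x, g1 - g2 + (1 / 2 : ℝ) • G⟫
      = -(lam * a) + lam * b - (lam / 2) * c := by
    rw [hpx]
    simp only [inner_neg_left, inner_add_right, inner_sub_right,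
      real_inner_smul_left, real_inner_smul_right]
    rw [real_inner_comm g1 G, real_inner_comm g2 G, ha, hb, hc]
    ring
  have ER2 : ‖xplus - x‖ ^ 2 = lam ^ 2 * c := by
    rw [hpx, norm_neg, norm_smul, Real.norm_eq_abs, mul_pow, sq_abs, hc,
      real_inner_self_eq_norm_sq]
  have ER3 : ⟪xplus - x, w⟫ = -(lam * r) := by
    rw [hpx, inner_neg_left, real_inner_smul_left, hr]
  rw [ER1, ER2, ER3]
  have e5 : (1 / (2 * lam)) * (lam ^ 2 * c) = (lam / 2) * c := by
    field_simp
  have e6 : (1 / lam) * -(lam * r) = -r := by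
    field_simp
  rw [e5, e6]
  linarith
end

section
/- (Zero-order linesearch implies negativity of the unfavorable term) Fix λ > 0 and x ∈ ℝ^d, and set x⁺ = x − λG_λ(x). If the composite linesearch condition holds at x with stepsize λ, then ⟨x⁺ − x, ∇f(x⁺) − ∇f(x) + (1/2)G_λ(x)⟩ ≤ 0. -/
open RealInnerProductSpace


lemma grad_ineq {d : ℕ} (f : EuclideanSpace ℝ (Fin d) → ℝ)
    (hf_conv : ConvexOn ℝ Set.univ f) (hf_diff : Differentiable ℝ f)
    (z y : EuclideanSpace ℝ (Fin d)) :
    f z + ⟪gradient f z, y - z⟫ ≤ f y := by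
  set g : ℝ → ℝ := fun t => f (z + t • (y - z)) with hg
  have hgc : ConvexOn ℝ Set.univ g := by
    have := hf_conv.comp_affineMap (AffineMap.lineMap z y)
    have heq : (f ∘ AffineMap.lineMap z y) = g := by
      funext t
      simp [g, AffineMap.lineMap_apply, add_comm]
    rw [heq] at this
    simpa using this
  have hc : HasDerivAt (fun t : ℝ => z + t • (y - z)) (y - z) 0 := by
    simpa using ((hasDerivAt_id (0:ℝ)).smul_const (y - z)).const_add z
  have hgrad : HasFDerivAt f (InnerProductSpace.toDual ℝ _ (gradient f z)) z :=
    (hf_diff z).hasGradientAt.hasFDerivAt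
  have hgd : HasDerivAt g ⟪gradient f z, y - z⟫ 0 := by
    have h0 : z = z + (0:ℝ) • (y - z) := by simp
    rw [h0] at hgrad
    have := hgrad.comp_hasDerivAt 0 hc
    simpa [g, Function.comp_def] using this
  have := hgc.le_slope_of_hasDerivAt (Set.mem_univ 0) (Set.mem_univ 1) one_pos hgd
  rw [slope_def_field] at this
  simp only [g, zero_smul, add_zero, one_smul] at this
  have : ⟪gradient f z, y - z⟫ ≤ f (z + (y - z)) - f z := by
    simpa using this
  rw [show z + (y - z) = y by abel] at this
  linarith

/-- Zero-order linesearch implies negativity of the unfavorable term: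
Fix λ > 0 and x ∈ ℝ^d, and set x⁺ = x − λG_λ(x). If the composite linesearch condition
f(x − 2λG_λ(x)) ≤ f(x − λG_λ(x)) − λ⟨G_λ(x), ∇f(x)⟩ + (λ/2)‖G_λ(x)‖²
holds at x with stepsize λ, then ⟨x⁺ − x, ∇f(x⁺) − ∇f(x) + (1/2)G_λ(x)⟩ ≤ 0. -/
theorem stmt_4 {d : ℕ} (f h : EuclideanSpace ℝ (Fin d) → ℝ)
    (hf_conv : ConvexOn ℝ Set.univ f) (hf_diff : Differentiable ℝ f)
    (hh_conv : ConvexOn ℝ Set.univ h)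
    (lam : ℝ) (hlam : 0 < lam)
    (x p G xplus : EuclideanSpace ℝ (Fin d))
    (hp : ∀ u, h p + (1 / (2 * lam)) * ‖p - (x - lam • gradient f x)‖ ^ 2 ≤
          h u + (1 / (2 * lam)) * ‖u - (x - lam • gradient f x)‖ ^ 2)
    (hG : G = lam⁻¹ • (x - p))
    (hxplus : xplus = x - lam • G)
    (hls : f (x - (2 * lam) • G) ≤ f (x - lam • G)
            - lam * ⟪G, gradient f x⟫ + (lam / 2) * ‖G‖ ^ 2) :
    ⟪xplus - x, gradient f xplus - gradient f x + (1 / 2 : ℝ) • G⟫ ≤ 0 := by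
  have key := grad_ineq f hf_conv hf_diff xplus (x - (2*lam) • G)
  have hdiff : x - (2*lam) • G - xplus = -(lam • G) := by
    rw [hxplus]; module
  rw [hdiff] at key
  rw [hxplus] at *
  have hk : f (x - lam • G) - lam * ⟪gradient f (x - lam • G), G⟫ ≤ f (x - (2*lam) • G) := by
    have : ⟪gradient f (x - lam • G), -(lam • G)⟫ = -(lam * ⟪gradient f (x - lam • G), G⟫) := by
      rw [inner_neg_right, real_inner_smul_right]
    linarith [key, this.symm.le, this.le]
  have hcomb : - (lam * ⟪gradient f (x - lam • G), G⟫) ≤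
      - lam * ⟪G, gradient f x⟫ + (lam / 2) * ‖G‖ ^ 2 := by linarith
  have hxs : x - lam • G - x = -(lam • G) := by module
  rw [hxs, inner_neg_left, real_inner_smul_left, inner_add_right, inner_sub_right,
    real_inner_smul_right, real_inner_self_eq_norm_sq]
  rw [real_inner_comm G (gradient f (x - lam • G))] at hk hcomb
  nlinarith [hcomb, sq_nonneg ‖G‖]
end

section
/- (Uniform stepsize lower bound, composite case) Suppose the gradient of f is L-Lipschitz for some L > 0. Then for every x ∈ ℝ^d and every stepsize λ with 0 < λ ≤ 1/(3L), the composite linesearch condition holds at x with stepsize λ; that is, f(x − 2λG_λ(x)) ≤ f(x − λG_λ(x)) − λ⟨G_λ(x), ∇f(x)⟩ + (λ/2)‖G_λ(x)‖². -/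
open RealInnerProductSpace

set_option maxHeartbeats 1000000
open RealInnerProductSpace

lemma descent_lemma {d : ℕ} (f : EuclideanSpace ℝ (Fin d) → ℝ)
    (hf : Differentiable ℝ f) (L : ℝ) (hL : 0 ≤ L)
    (hl : ∀ a b, ‖gradient f a - gradient f b‖ ≤ L * ‖a - b‖)
    (x y : EuclideanSpace ℝ (Fin d)) :
    f y ≤ f x + ⟪gradient f x, y - x⟫ + L / 2 * ‖y - x‖ ^ 2 := by
  set v := y - x with hv
  have hc : ∀ t : ℝ, HasDerivAt (fun t : ℝ => x + t • v) v t := by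
    intro t
    simpa using ((hasDerivAt_id t).smul_const v).const_add x
  have hg : ∀ t : ℝ, HasDerivAt (fun t : ℝ => f (x + t • v))
      (⟪gradient f (x + t • v), v⟫) t := by
    intro t
    have hd := (hf (x + t • v)).hasGradientAt.hasFDerivAt
    have := hd.comp_hasDerivAt t (hc t)
    simpa [InnerProductSpace.toDual_apply_apply, Function.comp_def] using this
  have hgradcont : Continuous (gradient f) := by
    have : LipschitzWith (Real.toNNReal L) (gradient f) := by
      apply LipschitzWith.of_dist_le_mul
      intro a b
      simpa [dist_eq_norm, Real.coe_toNNReal L hL] using hl a b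
    exact this.continuous
  have hcont : Continuous fun t : ℝ => ⟪gradient f (x + t • v), v⟫ := by
    exact (hgradcont.comp (by continuity)).inner continuous_const
  have hint : IntervalIntegrable (fun t : ℝ => ⟪gradient f (x + t • v), v⟫)
      MeasureTheory.volume 0 1 := hcont.intervalIntegrable 0 1
  have hftc : ∫ t in (0:ℝ)..1, ⟪gradient f (x + t • v), v⟫ = f y - f x := by
    have := intervalIntegral.integral_eq_sub_of_hasDerivAt
      (f := fun t : ℝ => f (x + t • v)) (fun t _ => hg t) hint
    simpa [hv] using this
  have hbound : ∫ t in (0:ℝ)..1, ⟪gradient f (x + t • v), v⟫ ≤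
      ⟪gradient f x, v⟫ + L / 2 * ‖v‖ ^ 2 := by
    have h1 : ∫ t in (0:ℝ)..1, ⟪gradient f (x + t • v), v⟫ ≤
        ∫ t in (0:ℝ)..1, (⟪gradient f x, v⟫ + L * t * ‖v‖ ^ 2) := by
      apply intervalIntegral.integral_mono_on (by norm_num) hint
      · apply IntervalIntegrable.add intervalIntegrable_const
        exact (Continuous.intervalIntegrable (by fun_prop : Continuous fun t : ℝ => L * t * ‖v‖ ^ 2) 0 1)
      · intro t ht
        have ht0 : 0 ≤ t := ht.1
        have key : ⟪gradient f (x + t • v) - gradient f x, v⟫ ≤ L * t * ‖v‖ ^ 2 := by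
          calc ⟪gradient f (x + t • v) - gradient f x, v⟫
              ≤ ‖gradient f (x + t • v) - gradient f x‖ * ‖v‖ := real_inner_le_norm _ _
            _ ≤ (L * ‖(x + t • v) - x‖) * ‖v‖ := by
                have := hl (x + t • v) x
                nlinarith [norm_nonneg v]
            _ = L * t * ‖v‖ ^ 2 := by
                simp [norm_smul, abs_of_nonneg ht0]; ring
        have := inner_sub_left (𝕜 := ℝ) (gradient f (x + t • v)) (gradient f x) v
        linarith [key, this.symm.le, this.le]
    have h2 : ∫ t in (0:ℝ)..1, (⟪gradient f x, v⟫ + L * t * ‖v‖ ^ 2) =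
        ⟪gradient f x, v⟫ + L / 2 * ‖v‖ ^ 2 := by
      rw [intervalIntegral.integral_add intervalIntegrable_const
        (Continuous.intervalIntegrable (by fun_prop : Continuous fun t : ℝ => L * t * ‖v‖ ^ 2) 0 1)]
      simp only [intervalIntegral.integral_const, smul_eq_mul]
      have : ∫ t in (0:ℝ)..1, L * t * ‖v‖ ^ 2 = L / 2 * ‖v‖ ^ 2 := by
        have : (fun t : ℝ => L * t * ‖v‖ ^ 2) = fun t : ℝ => (L * ‖v‖ ^ 2) * t := by
          ext t; ring
        rw [this, intervalIntegral.integral_const_mul, integral_id]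
        ring
      rw [this]; ring
    linarith [h1, h2.le]
  linarith [hftc ▸ hbound]


/-- Uniform stepsize lower bound, composite case: Suppose the gradient of f
is L-Lipschitz for some L > 0. Then for every x ∈ ℝ^d and every stepsize λ with
0 < λ ≤ 1/(3L), the composite linesearch condition holds at x with stepsize λ; that is,
f(x − 2λG_λ(x)) ≤ f(x − λG_λ(x)) − λ⟨G_λ(x), ∇f(x)⟩ + (λ/2)‖G_λ(x)‖²,
where G_λ(x) = (1/λ)(x − prox_{λh}(x − λ∇f(x))). -/
theorem stmt_7 {d : ℕ} (f h : EuclideanSpace ℝ (Fin d) → ℝ)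
    (hf_diff : Differentiable ℝ f)
    (L : ℝ) (hL : 0 < L)
    (hf_lip : ∀ a b, ‖gradient f a - gradient f b‖ ≤ L * ‖a - b‖)
    (hh_conv : ConvexOn ℝ Set.univ h) :
    ∀ (x : EuclideanSpace ℝ (Fin d)) (lam : ℝ), 0 < lam → lam ≤ 1 / (3 * L) →
      ∀ (p G : EuclideanSpace ℝ (Fin d)),
        (∀ u, h p + (1 / (2 * lam)) * ‖p - (x - lam • gradient f x)‖ ^ 2 ≤
              h u + (1 / (2 * lam)) * ‖u - (x - lam • gradient f x)‖ ^ 2) →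
        G = lam⁻¹ • (x - p) →
        f (x - (2 * lam) • G) ≤ f (x - lam • G)
          - lam * ⟪G, gradient f x⟫ + (lam / 2) * ‖G‖ ^ 2 := by
  intro x lam hlam hlam3 p G _ hG
  have hlamne : lam ≠ 0 := hlam.ne'
  have hxp : x - p = lam • G := by
    rw [hG, smul_smul, mul_inv_cancel₀ hlamne, one_smul]
  have hp : x - lam • G = p := by rw [← hxp]; abel
  have h2 : x - (2 * lam) • G = p - lam • G := by
    rw [← hp, two_mul, add_smul]; abel
  have hdesc := descent_lemma f hf_diff L hL.le hf_lip p (p - lam • G)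
  have hsub : (p - lam • G) - p = -(lam • G) := by abel
  rw [hsub] at hdesc
  have e1 : ⟪gradient f p, -(lam • G)⟫ = -(lam * ⟪G, gradient f p⟫) := by
    rw [inner_neg_right, real_inner_smul_right, real_inner_comm]
  have e2 : ‖-(lam • G)‖ ^ 2 = lam ^ 2 * ‖G‖ ^ 2 := by
    rw [norm_neg, norm_smul]
    simp [abs_of_pos hlam]
    ring
  rw [e1, e2] at hdesc
  have hlipG : ⟪G, gradient f x - gradient f p⟫ ≤ L * lam * ‖G‖ ^ 2 := by
    calc ⟪G, gradient f x - gradient f p⟫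
        ≤ ‖G‖ * ‖gradient f x - gradient f p‖ := real_inner_le_norm _ _
      _ ≤ ‖G‖ * (L * ‖x - p‖) :=
          mul_le_mul_of_nonneg_left (hf_lip x p) (norm_nonneg G)
      _ = L * lam * ‖G‖ ^ 2 := by
          rw [hxp, norm_smul]
          simp [abs_of_pos hlam]
          ring
  have hinner : ⟪G, gradient f x - gradient f p⟫
      = ⟪G, gradient f x⟫ - ⟪G, gradient f p⟫ := inner_sub_right _ _ _
  have h3L : lam * (3 * L) ≤ 1 := (le_div_iff₀ (by positivity)).mp hlam3
  rw [h2, hp]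
  nlinarith [hdesc, mul_le_mul_of_nonneg_left hlipG hlam.le,
    mul_nonneg hlam.le (sq_nonneg ‖G‖),
    mul_le_mul_of_nonneg_right h3L (mul_nonneg hlam.le (sq_nonneg ‖G‖))]
end

section
/- (Descent inequality under the linesearch) Fix λ > 0 and x ∈ ℝ^d. If the composite linesearch condition holds at x with stepsize λ, then F(x − λG_λ(x)) ≤ F(x) − (λ/2)‖G_λ(x)‖². -/
open RealInnerProductSpace

set_option maxHeartbeats 2000000 in
/-- Descent inequality under the linesearch: Fix λ > 0 and x ∈ ℝ^d.
If the composite linesearch condition holds at x with stepsize λ, then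
F(x − λG_λ(x)) ≤ F(x) − (λ/2)‖G_λ(x)‖², where F = f + h and
G_λ(x) = (1/λ)(x − prox_{λh}(x − λ∇f(x))). -/
theorem stmt_9 {d : ℕ} (f h : EuclideanSpace ℝ (Fin d) → ℝ)
    (hf_conv : ConvexOn ℝ Set.univ f) (hf_diff : Differentiable ℝ f)
    (hh_conv : ConvexOn ℝ Set.univ h)
    (lam : ℝ) (hlam : 0 < lam)
    (x p G : EuclideanSpace ℝ (Fin d))
    (hp : ∀ u, h p + (1 / (2 * lam)) * ‖p - (x - lam • gradient f x)‖ ^ 2 ≤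
          h u + (1 / (2 * lam)) * ‖u - (x - lam • gradient f x)‖ ^ 2)
    (hG : G = lam⁻¹ • (x - p))
    (hls : f (x - (2 * lam) • G) ≤ f (x - lam • G)
            - lam * ⟪G, gradient f x⟫ + (lam / 2) * ‖G‖ ^ 2) :
    f (x - lam • G) + h (x - lam • G) ≤ (f x + h x) - (lam / 2) * ‖G‖ ^ 2 := by
  have hlamne : lam ≠ 0 := ne_of_gt hlam
  set g := gradient f x with hg
  set y := x - lam • g with hy
  have hxp : lam • G = x - p := by
    rw [hG, smul_smul, mul_inv_cancel₀ hlamne, one_smul]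
  have hpx : x - lam • G = p := by rw [hxp]; abel
  rw [hpx] at hls ⊢
  -- norm expansion lemma
  have expand : ∀ (a b : EuclideanSpace ℝ (Fin d)) (t : ℝ),
      ‖a + t • b‖ ^ 2 = ‖a‖ ^ 2 + 2 * t * ⟪a, b⟫ + t ^ 2 * ‖b‖ ^ 2 := by
    intro a b t
    rw [← real_inner_self_eq_norm_sq, ← real_inner_self_eq_norm_sq,
      ← real_inner_self_eq_norm_sq, real_inner_add_add_self,
      real_inner_smul_right, real_inner_smul_left, real_inner_smul_right]
    ring
  set q := ‖x - p‖ ^ 2 with hq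
  have hq0 : 0 ≤ q := sq_nonneg _
  -- subgradient-type inequality for h at p, with small parameter t
  have step : ∀ t : ℝ, 0 < t → t ≤ 1 →
      h x - h p ≥ (1 / lam) * ⟪y - p, x - p⟫ - t * (1 / (2 * lam)) * q := by
    intro t ht ht1
    have hu := hp ((1 - t) • p + t • x)
    have hrw : (1 - t) • p + t • x - y = (p - y) + t • (x - p) := by
      rw [hy]; module
    rw [hrw, expand] at hu
    have hconv := hh_conv.2 (Set.mem_univ p) (Set.mem_univ x)
      (by linarith : (0:ℝ) ≤ 1 - t) (le_of_lt ht) (by ring)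
    rw [smul_eq_mul, smul_eq_mul] at hconv
    have hip : ⟪p - y, x - p⟫ = -⟪y - p, x - p⟫ := by
      rw [show p - y = -(y - p) by abel, inner_neg_left]
    rw [hip] at hu
    have hlam2 : 0 < 2 * lam := by linarith
    have e3 : 1 / (2 * lam) * (‖p - y‖ ^ 2 + 2 * t * (-⟪y - p, x - p⟫) + t ^ 2 * ‖x - p‖ ^ 2)
        = 1 / (2 * lam) * ‖p - y‖ ^ 2 - t * ((1 / lam) * ⟪y - p, x - p⟫)
          + t * (t * (1 / (2 * lam)) * ‖x - p‖ ^ 2) := by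
      field_simp; ring
    rw [e3] at hu
    have key : t * ((h x - h p) - ((1 / lam) * ⟪y - p, x - p⟫
        - t * (1 / (2 * lam)) * q)) ≥ 0 := by
      have hqq : q = ‖x - p‖ ^ 2 := hq
      rw [hqq]; nlinarith [hu, hconv]
    have := nonneg_of_mul_nonneg_right key ht
    linarith [this]
  -- pass to the limit t → 0⁺
  have hA : h x - h p ≥ (1 / lam) * ⟪y - p, x - p⟫ := by
    by_contra hcon
    push_neg at hcon
    set A := (1 / lam) * ⟪y - p, x - p⟫
    set δ := A - (h x - h p) with hδ
    have hδpos : 0 < δ := by simp only [hδ]; linarith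
    have hq1 : 0 < q + 1 := by linarith
    set t := min 1 (δ * (2 * lam) / (q + 1)) with htdef
    have ht0 : 0 < t := by
      apply lt_min one_pos
      positivity
    have ht1 : t ≤ 1 := min_le_left _ _
    have hstep := step t ht0 ht1
    have htle : t ≤ δ * (2 * lam) / (q + 1) := min_le_right _ _
    have hbound : t * (1 / (2 * lam)) * q < δ := by
      have h1 : t * (1 / (2 * lam)) * q ≤ (δ * (2 * lam) / (q + 1)) * (1 / (2 * lam)) * q := by
        apply mul_le_mul_of_nonneg_right _ hq0
        apply mul_le_mul_of_nonneg_right htle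
        positivity
      have h2 : (δ * (2 * lam) / (q + 1)) * (1 / (2 * lam)) * q = δ * (q / (q + 1)) := by
        field_simp
      have h3 : δ * (q / (q + 1)) < δ := by
        have : q / (q + 1) < 1 := by
          rw [div_lt_one hq1]; linarith
        nlinarith
      linarith
    linarith
  -- compute the inner product
  have hyp : y - p = lam • G - lam • g := by
    rw [hy, hxp]; abel
  have hinner : ⟪y - p, x - p⟫ = lam ^ 2 * (‖G‖ ^ 2 - ⟪g, G⟫) := by
    rw [hyp, ← hxp, ← real_inner_self_eq_norm_sq]
    rw [inner_sub_left, real_inner_smul_left, real_inner_smul_left, real_inner_smul_right,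
      real_inner_smul_right]
    ring
  have hA' : h p ≤ h x - lam * ‖G‖ ^ 2 + lam * ⟪g, G⟫ := by
    rw [hinner] at hA
    have : (1 / lam) * (lam ^ 2 * (‖G‖ ^ 2 - ⟪g, G⟫)) = lam * ‖G‖ ^ 2 - lam * ⟪g, G⟫ := by
      field_simp
    rw [this] at hA
    linarith
  -- f part via midpoint convexity
  have hmid : p = (1/2 : ℝ) • x + (1/2 : ℝ) • (x - (2 * lam) • G) := by
    have h2 : (2 * lam) • G = (2:ℝ) • (x - p) := by
      rw [mul_smul, hxp]
    rw [h2]; module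
  have hfmid : f p ≤ (1/2 : ℝ) * f x + (1/2 : ℝ) * f (x - (2 * lam) • G) := by
    have := hf_conv.2 (Set.mem_univ x) (Set.mem_univ (x - (2 * lam) • G))
      (by norm_num : (0:ℝ) ≤ 1/2) (by norm_num : (0:ℝ) ≤ 1/2) (by norm_num)
    rw [← hmid] at this
    exact this
  have hsym : ⟪G, g⟫ = ⟪g, G⟫ := real_inner_comm _ _
  -- combine
  nlinarith [hfmid, hls, hA']
end

section
/- (Theorem 1: non-accelerated convergence rate) Suppose the gradient of f is L-Lipschitz for some L > 0 and x* is a minimizer of F = f + h. Let (x_k)_{k≥0} and positive stepsizes (λ_k)_{k≥0} satisfy, for every k: (a) the composite linesearch condition holds at x_k with stepsize λ_k, (b) λ_k ≥ 1/(3L), and (c) x_{k+1} = x_k − λ_k G_{λ_k}(x_k). Then for every k ≥ 1: F(x_k) − F(x*) ≤ (3L/2)‖x_0 − x*‖² / k. -/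
open RealInnerProductSpace

section Helpers

lemma grad_ineq_aux {d : ℕ} (f : EuclideanSpace ℝ (Fin d) → ℝ)
    (hconv : ConvexOn ℝ Set.univ f) (hd : Differentiable ℝ f)
    (x u : EuclideanSpace ℝ (Fin d)) :
    f x + ⟪gradient f x, u - x⟫ ≤ f u := by
  set g := gradient f x with hgdef
  have hline : HasDerivAt (fun t : ℝ => f (x + t • (u - x))) ⟪g, u - x⟫ 0 := by
    have h1 : HasDerivAt (fun t : ℝ => x + t • (u - x)) (u - x) 0 := by
      simpa using ((hasDerivAt_id (0:ℝ)).smul_const (u - x)).const_add x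
    have h2 : HasFDerivAt f (InnerProductSpace.toDual ℝ _ g) (x + (0:ℝ) • (u - x)) := by
      rw [hgdef]; simpa using ((hd x).hasGradientAt).hasFDerivAt
    have := h2.comp_hasDerivAt (0:ℝ) h1
    simp only [InnerProductSpace.toDual_apply_apply] at this; exact this
  have hslope : Filter.Tendsto (slope (fun t : ℝ => f (x + t • (u - x))) 0)
      (nhdsWithin 0 (Set.Ioi 0)) (nhds ⟪g, u - x⟫) := by
    have := hasDerivAt_iff_tendsto_slope.mp hline
    exact this.mono_left (nhdsWithin_mono _ (fun t ht => ne_of_gt ht))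
  have hub : ∀ᶠ t in nhdsWithin (0:ℝ) (Set.Ioi 0),
      slope (fun t : ℝ => f (x + t • (u - x))) 0 t ≤ f u - f x := by
    filter_upwards [Ioo_mem_nhdsGT_of_mem (by constructor <;> norm_num : (0:ℝ) ∈ Set.Ico 0 1)]
      with t ht
    have ht0 : 0 < t := ht.1
    have hcomb : x + t • (u - x) = (1 - t) • x + t • u := by
      rw [sub_smul, one_smul, smul_sub]; abel
    have := hconv.2 (Set.mem_univ x) (Set.mem_univ u) (by linarith [ht.2] : 0 ≤ 1 - t)
      (le_of_lt ht0) (by ring)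
    rw [← hcomb] at this
    simp only [slope_def_field, smul_eq_mul] at this ⊢
    rw [sub_zero, zero_smul, add_zero, div_le_iff₀ ht0]
    nlinarith
  have := le_of_tendsto hslope hub
  linarith

lemma norm_combo_aux {d : ℕ} (v w : EuclideanSpace ℝ (Fin d)) (t : ℝ) :
    ‖(1 - t) • v + t • w‖ ^ 2 = (1 - t) * ‖v‖ ^ 2 + t * ‖w‖ ^ 2 - t * (1 - t) * ‖v - w‖ ^ 2 := by
  have h1 : ‖(1 - t) • v + t • w‖ ^ 2 = ⟪(1 - t) • v + t • w, (1 - t) • v + t • w⟫ :=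
    (real_inner_self_eq_norm_sq _).symm
  have h2 : ‖v - w‖ ^ 2 = ⟪v - w, v - w⟫ := (real_inner_self_eq_norm_sq _).symm
  have h3 : ‖v‖ ^ 2 = ⟪v, v⟫ := (real_inner_self_eq_norm_sq _).symm
  have h4 : ‖w‖ ^ 2 = ⟪w, w⟫ := (real_inner_self_eq_norm_sq _).symm
  rw [h1, h2, h3, h4]
  simp only [inner_add_add_self, inner_sub_sub_self, inner_smul_left, inner_smul_right,
    RCLike.conj_to_real, real_inner_comm v w]
  ring

lemma prox_strong_aux {d : ℕ} (h : EuclideanSpace ℝ (Fin d) → ℝ)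
    (hh_conv : ConvexOn ℝ Set.univ h) (y p : EuclideanSpace ℝ (Fin d)) (c : ℝ)
    (hmin : ∀ u, h p + c * ‖p - y‖ ^ 2 ≤ h u + c * ‖u - y‖ ^ 2) (u : EuclideanSpace ℝ (Fin d)) :
    h p + c * ‖p - y‖ ^ 2 + c * ‖u - p‖ ^ 2 ≤ h u + c * ‖u - y‖ ^ 2 := by
  have key : ∀ t ∈ Set.Ioo (0:ℝ) 1,
      h p + c * ‖p - y‖ ^ 2 + c * (1 - t) * ‖u - p‖ ^ 2 ≤ h u + c * ‖u - y‖ ^ 2 := by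
    intro t ht
    have ht0 := ht.1
    have ht1 := ht.2
    have hmem := hmin ((1 - t) • p + t • u)
    have hcvx := hh_conv.2 (Set.mem_univ p) (Set.mem_univ u)
      (by linarith : (0:ℝ) ≤ 1 - t) (le_of_lt ht0) (by ring)
    have hnorm : ‖(1 - t) • p + t • u - y‖ ^ 2
        = (1 - t) * ‖p - y‖ ^ 2 + t * ‖u - y‖ ^ 2 - t * (1 - t) * ‖p - u‖ ^ 2 := by
      have : (1 - t) • p + t • u - y = (1 - t) • (p - y) + t • (u - y) := by
        rw [smul_sub, smul_sub]; rw [sub_smul, sub_smul, one_smul, one_smul]; abel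
      rw [this, norm_combo_aux]
      congr 3
      rw [show p - y - (u - y) = p - u by abel]
    rw [hnorm] at hmem
    simp only [smul_eq_mul] at hcvx
    have hnn : (0:ℝ) ≤ ‖p - u‖ ^ 2 := by positivity
    have hpu : ‖p - u‖ = ‖u - p‖ := norm_sub_rev _ _
    rw [hpu] at hmem hnn
    nlinarith
  have htend : Filter.Tendsto (fun t : ℝ => h p + c * ‖p - y‖ ^ 2 + c * (1 - t) * ‖u - p‖ ^ 2)
      (nhdsWithin 0 (Set.Ioi 0)) (nhds (h p + c * ‖p - y‖ ^ 2 + c * ‖u - p‖ ^ 2)) := by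
    have hcont : Continuous (fun t : ℝ => h p + c * ‖p - y‖ ^ 2 + c * (1 - t) * ‖u - p‖ ^ 2) := by
      continuity
    have := hcont.tendsto 0
    simp only [sub_zero, mul_one] at this
    exact this.mono_left nhdsWithin_le_nhds
  refine le_of_tendsto htend ?_
  filter_upwards [Ioo_mem_nhdsGT_of_mem (by constructor <;> norm_num : (0:ℝ) ∈ Set.Ico 0 1)]
    with t ht using key t ht

lemma expand_sq_aux {d : ℕ} (a g : EuclideanSpace ℝ (Fin d)) (μ : ℝ) :
    ‖a + μ • g‖ ^ 2 = ‖a‖ ^ 2 + 2 * μ * ⟪g, a⟫ + μ ^ 2 * ‖g‖ ^ 2 := by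
  rw [norm_add_sq_real, real_inner_smul_right, norm_smul, real_inner_comm]
  simp [mul_pow, abs_mul_abs_self, sq_abs]; ring

lemma per_step_aux {d : ℕ} (f h : EuclideanSpace ℝ (Fin d) → ℝ)
    (xk P u g Gk : EuclideanSpace ℝ (Fin d)) (μ : ℝ) (hμ : 0 < μ)
    (hPdef : P = xk - μ • Gk)
    (hgrad : f xk + ⟪g, u - xk⟫ ≤ f u)
    (hdesc : f P ≤ f xk - μ * ⟪Gk, g⟫ + (μ / 2) * ‖Gk‖ ^ 2)
    (hps : h P + (1/(2*μ)) * ‖P - (xk - μ • g)‖ ^ 2 + (1/(2*μ)) * ‖u - P‖ ^ 2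
          ≤ h u + (1/(2*μ)) * ‖u - (xk - μ • g)‖ ^ 2) :
    (f P + h P) + (1/(2*μ)) * ‖u - P‖ ^ 2 ≤ (f u + h u) + (1/(2*μ)) * ‖u - xk‖ ^ 2 := by
  set c : ℝ := 1/(2*μ) with hcdef
  have e1 : ‖u - (xk - μ • g)‖ ^ 2
      = ‖u - xk‖ ^ 2 + 2 * μ * ⟪g, u - xk⟫ + μ ^ 2 * ‖g‖ ^ 2 := by
    rw [show u - (xk - μ • g) = (u - xk) + μ • g by abel, expand_sq_aux]
  have e2 : ‖P - (xk - μ • g)‖ ^ 2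
      = μ ^ 2 * ‖Gk‖ ^ 2 - 2 * μ ^ 2 * ⟪Gk, g⟫ + μ ^ 2 * ‖g‖ ^ 2 := by
    rw [show P - (xk - μ • g) = (P - xk) + μ • g by abel, expand_sq_aux, hPdef,
      show xk - μ • Gk - xk = -(μ • Gk) by abel]
    rw [inner_neg_right, real_inner_smul_right, norm_neg, norm_smul, real_inner_comm]
    simp [mul_pow, abs_mul_abs_self, sq_abs]
    ring
  rw [e1, e2] at hps
  have hμ' : μ ≠ 0 := ne_of_gt hμ
  have q1 : c * (‖u - xk‖ ^ 2 + 2 * μ * ⟪g, u - xk⟫ + μ ^ 2 * ‖g‖ ^ 2)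
      = c * ‖u - xk‖ ^ 2 + ⟪g, u - xk⟫ + (μ / 2) * ‖g‖ ^ 2 := by
    rw [hcdef]; field_simp
  have q2 : c * (μ ^ 2 * ‖Gk‖ ^ 2 - 2 * μ ^ 2 * ⟪Gk, g⟫ + μ ^ 2 * ‖g‖ ^ 2)
      = (μ / 2) * ‖Gk‖ ^ 2 - μ * ⟪Gk, g⟫ + (μ / 2) * ‖g‖ ^ 2 := by
    rw [hcdef]; field_simp
  rw [q1, q2] at hps
  linarith

end Helpers

/-- Theorem 1: non-accelerated convergence rate: Suppose the gradient of f
is L-Lipschitz for some L > 0 and x* is a minimizer of F = f + h. Let (x_k) and positive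
stepsizes (λ_k) satisfy, for every k: (a) the composite linesearch condition holds at x_k
with stepsize λ_k, (b) λ_k ≥ 1/(3L), and (c) x_{k+1} = x_k − λ_k G_{λ_k}(x_k). Then for
every k ≥ 1: F(x_k) − F(x*) ≤ (3L/2)‖x_0 − x*‖² / k. -/
theorem stmt_12 {d : ℕ} (f h : EuclideanSpace ℝ (Fin d) → ℝ)
    (hf_conv : ConvexOn ℝ Set.univ f) (hf_diff : Differentiable ℝ f)
    (L : ℝ) (hL : 0 < L)
    (hf_lip : ∀ a b, ‖gradient f a - gradient f b‖ ≤ L * ‖a - b‖)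
    (hh_conv : ConvexOn ℝ Set.univ h)
    (xstar : EuclideanSpace ℝ (Fin d))
    (hmin : ∀ y, f xstar + h xstar ≤ f y + h y)
    (x p G : ℕ → EuclideanSpace ℝ (Fin d)) (lam : ℕ → ℝ)
    (hlam_pos : ∀ k, 0 < lam k)
    (hp : ∀ k u, h (p k) + (1 / (2 * lam k)) * ‖p k - (x k - lam k • gradient f (x k))‖ ^ 2 ≤
          h u + (1 / (2 * lam k)) * ‖u - (x k - lam k • gradient f (x k))‖ ^ 2)
    (hG : ∀ k, G k = (lam k)⁻¹ • (x k - p k))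
    (hls : ∀ k, f (x k - (2 * lam k) • G k) ≤ f (x k - lam k • G k)
            - lam k * ⟪G k, gradient f (x k)⟫ + (lam k / 2) * ‖G k‖ ^ 2)
    (hlam_lb : ∀ k, 1 / (3 * L) ≤ lam k)
    (hupd : ∀ k, x (k + 1) = x k - lam k • G k) :
    ∀ k : ℕ, 1 ≤ k →
      (f (x k) + h (x k)) - (f xstar + h xstar) ≤
        (3 * L / 2) * ‖x 0 - xstar‖ ^ 2 / (k : ℝ) := by
  -- F at the iterates and at the minimizer
  set Fk : ℕ → ℝ := fun k => f (x k) + h (x k) with hFk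
  set Fs : ℝ := f xstar + h xstar with hFs
  set D : ℕ → ℝ := fun k => ‖x k - xstar‖ ^ 2 with hD
  clear_value Fk Fs D
  -- x (k+1) = p k
  have hxp : ∀ k, x (k + 1) = p k := by
    intro k
    rw [hupd k, hG k, smul_smul, mul_inv_cancel₀ (ne_of_gt (hlam_pos k)), one_smul]
    abel
  -- descent inequality from the linesearch
  have hdesc : ∀ k, f (x (k + 1)) ≤ f (x k) - lam k * ⟪G k, gradient f (x k)⟫
      + (lam k / 2) * ‖G k‖ ^ 2 := by
    intro k
    have hmid : x k - lam k • G k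
        = (1 - (1/2 : ℝ)) • (x k) + (1/2 : ℝ) • (x k - (2 * lam k) • G k) := by
      rw [smul_sub, sub_smul, one_smul, smul_smul]
      rw [show (1/2 : ℝ) * (2 * lam k) = lam k by ring]
      abel
    have hcvx := hf_conv.2 (Set.mem_univ (x k)) (Set.mem_univ (x k - (2 * lam k) • G k))
      (by norm_num : (0:ℝ) ≤ 1 - 1/2) (by norm_num : (0:ℝ) ≤ (1/2:ℝ)) (by norm_num)
    rw [← hmid] at hcvx
    simp only [smul_eq_mul] at hcvx
    have := hls k
    rw [hupd k]
    linarith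
  -- per-step inequality
  have step : ∀ k u, Fk (k + 1) + (1/(2 * lam k)) * ‖u - x (k + 1)‖ ^ 2
      ≤ (f u + h u) + (1/(2 * lam k)) * ‖u - x k‖ ^ 2 := by
    intro k u
    have hgrad := grad_ineq_aux f hf_conv hf_diff (x k) u
    have hps := prox_strong_aux h hh_conv (x k - lam k • gradient f (x k)) (p k)
      (1/(2 * lam k)) (hp k) u
    rw [← hxp k] at hps
    rw [hFk]
    exact per_step_aux f h (x k) (x (k+1)) u (gradient f (x k)) (G k) (lam k)
      (hlam_pos k) (hupd k) hgrad (hdesc k) hps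
  -- monotone decrease of Fk
  have hmono : ∀ k, Fk (k + 1) ≤ Fk k := by
    intro k
    have hstep := step k (x k)
    have h2 : ‖x k - x k‖ ^ 2 = 0 := by simp
    rw [h2, mul_zero, add_zero] at hstep
    have h1 : (0:ℝ) ≤ (1/(2 * lam k)) * ‖x k - x (k + 1)‖ ^ 2 := by
      have := hlam_pos k; positivity
    have hFkk : Fk k = f (x k) + h (x k) := by rw [hFk]
    linarith
  have hFanti : Antitone Fk := antitone_nat_of_succ_le hmono
  -- per step with xstar, bounded using lam ≥ 1/(3L)
  have key : ∀ k, Fk (k + 1) - Fs ≤ (3 * L / 2) * (D k - D (k + 1)) := by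
    intro k
    have hs := step k xstar
    have hFge : Fs ≤ Fk (k + 1) := by rw [hFk]; exact hmin (x (k + 1))
    have hnormrev : ∀ j, ‖xstar - x j‖ = ‖x j - xstar‖ := fun j => norm_sub_rev _ _
    rw [hnormrev, hnormrev] at hs
    have hcpos : 0 < 1/(2 * lam k) := by have := hlam_pos k; positivity
    have hdiff_nonneg : 0 ≤ D k - D (k + 1) := by
      by_contra hcon
      push_neg at hcon
      have : (1/(2 * lam k)) * ‖x (k+1) - xstar‖ ^ 2 > (1/(2 * lam k)) * ‖x k - xstar‖ ^ 2 := by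
        apply mul_lt_mul_of_pos_left _ hcpos
        simp only [hD] at hcon ⊢
        linarith
      simp only [hD, hFk, hFs] at *
      linarith
    have hcle : 1/(2 * lam k) ≤ 3 * L / 2 := by
      have hlb := hlam_lb k
      have h3L : 0 < 3 * L := by linarith
      have hlp := hlam_pos k
      rw [div_le_div_iff₀ (by linarith) (by norm_num)]
      have : 1 ≤ lam k * (3 * L) := by
        calc (1:ℝ) = (1 / (3 * L)) * (3 * L) := by field_simp
        _ ≤ lam k * (3 * L) := by
            apply mul_le_mul_of_nonneg_right hlb (le_of_lt h3L)
      linarith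
    have step2 : Fk (k + 1) - Fs ≤ (1/(2 * lam k)) * (D k - D (k + 1)) := by
      simp only [hD, hFk, hFs] at *
      nlinarith
    calc Fk (k + 1) - Fs ≤ (1/(2 * lam k)) * (D k - D (k + 1)) := step2
      _ ≤ (3 * L / 2) * (D k - D (k + 1)) :=
          mul_le_mul_of_nonneg_right hcle hdiff_nonneg
  -- telescoping
  intro k hk
  have hsum : ∑ i ∈ Finset.range k, (Fk (i + 1) - Fs)
      ≤ (3 * L / 2) * (D 0 - D k) := by
    calc ∑ i ∈ Finset.range k, (Fk (i + 1) - Fs)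
        ≤ ∑ i ∈ Finset.range k, (3 * L / 2) * (D i - D (i + 1)) :=
          Finset.sum_le_sum (fun i _ => key i)
      _ = (3 * L / 2) * ∑ i ∈ Finset.range k, (D i - D (i + 1)) := by
          rw [Finset.mul_sum]
      _ = (3 * L / 2) * (D 0 - D k) := by rw [Finset.sum_range_sub' D k]
  have hlower : (k : ℝ) * (Fk k - Fs) ≤ ∑ i ∈ Finset.range k, (Fk (i + 1) - Fs) := by
    calc (k : ℝ) * (Fk k - Fs) = ∑ _i ∈ Finset.range k, (Fk k - Fs) := by
          rw [Finset.sum_const, Finset.card_range, nsmul_eq_mul]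
      _ ≤ ∑ i ∈ Finset.range k, (Fk (i + 1) - Fs) := by
          apply Finset.sum_le_sum
          intro i hi
          have : Fk k ≤ Fk (i + 1) := hFanti (Finset.mem_range.mp hi)
          linarith
  have hDk : 0 ≤ D k := by simp only [hD]; positivity
  have hkpos : (0:ℝ) < (k:ℝ) := by exact_mod_cast hk
  have hfinal : (k : ℝ) * (Fk k - Fs) ≤ (3 * L / 2) * D 0 := by
    have : (3 * L / 2) * (D 0 - D k) ≤ (3 * L / 2) * D 0 := by nlinarith
    linarith
  have : Fk k - Fs ≤ (3 * L / 2) * D 0 / (k : ℝ) := by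
    rw [le_div_iff₀ hkpos]
    linarith [hfinal]
  simpa only [hFk, hFs, hD] using this
end

section
/- (Summability of gradient-mapping norms) Suppose x* is a minimizer of F = f + h. Let (x_k)_{k≥0} and positive stepsizes (λ_k)_{k≥0} satisfy, for every k: the composite linesearch condition holds at x_k with stepsize λ_k, λ_k ≥ 1/(3L) for some L > 0, and x_{k+1} = x_k − λ_k G_{λ_k}(x_k). Then for every T ≥ 0: Σ_{k=0}^{T} ‖G_{λ_k}(x_k)‖² ≤ 6L (F(x_0) − F(x*)). -/
open RealInnerProductSpace

lemma aux_prox {d : ℕ} (h : EuclideanSpace ℝ (Fin d) → ℝ)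
    (hconv : ConvexOn ℝ Set.univ h) (lam : ℝ) (hlam : 0 < lam)
    (p y x' : EuclideanSpace ℝ (Fin d))
    (hmin : ∀ u, h p + (1 / (2 * lam)) * ‖p - y‖ ^ 2 ≤
      h u + (1 / (2 * lam)) * ‖u - y‖ ^ 2) :
    h p ≤ h x' + (1 / lam) * ⟪p - y, x' - p⟫ := by
  set I : ℝ := ⟪p - y, x' - p⟫ with hI
  set N : ℝ := ‖x' - p‖ ^ 2 with hN
  have hN0 : 0 ≤ N := by positivity
  refine le_of_forall_pos_le_add ?_
  intro ε hε
  set C : ℝ := (1 / (2 * lam)) * N with hC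
  have hC0 : 0 ≤ C := by positivity
  set t : ℝ := min 1 (ε / (C + 1)) with ht
  have ht0 : 0 < t := lt_min one_pos (by positivity)
  have ht1 : t ≤ 1 := min_le_left _ _
  have htC : t * C ≤ ε := by
    have h1 : t ≤ ε / (C + 1) := min_le_right _ _
    calc t * C ≤ (ε / (C + 1)) * C := mul_le_mul_of_nonneg_right h1 hC0
      _ ≤ ε := by
        rw [div_mul_eq_mul_div, div_le_iff₀ (by positivity)]
        nlinarith
  have hcomb := hconv.2 (Set.mem_univ p) (Set.mem_univ x') (by linarith : (0:ℝ) ≤ 1 - t)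
    (le_of_lt ht0) (by ring)
  simp only [smul_eq_mul] at hcomb
  have hu : (1 - t) • p + t • x' = p + t • (x' - p) := by
    rw [sub_smul, one_smul, smul_sub]; abel
  rw [hu] at hcomb
  have hnormexp : ‖(p + t • (x' - p)) - y‖ ^ 2 = ‖p - y‖ ^ 2 + 2 * (t * I) + t ^ 2 * N := by
    have he : (p + t • (x' - p)) - y = (p - y) + t • (x' - p) := by abel
    rw [he, @norm_add_sq_real, real_inner_smul_right, norm_smul, Real.norm_eq_abs,
      mul_pow, sq_abs, hI, hN]
  have hm := hmin (p + t • (x' - p))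
  rw [hnormexp] at hm
  have comb2 : h p + (1 / (2 * lam)) * (‖p - y‖ ^ 2) ≤
      (1 - t) * h p + t * h x' +
        (1 / (2 * lam)) * (‖p - y‖ ^ 2 + 2 * (t * I) + t ^ 2 * N) := by
    calc h p + (1 / (2 * lam)) * (‖p - y‖ ^ 2)
        ≤ h (p + t • (x' - p)) + (1 / (2 * lam)) * (‖p - y‖ ^ 2 + 2 * (t * I) + t ^ 2 * N) := hm
      _ ≤ _ := by linarith
  have hkey : t * h p ≤ t * (h x' + (1 / lam) * I + (1 / (2 * lam)) * t * N) := by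
    have hlam' : lam ≠ 0 := ne_of_gt hlam
    have hcc : (1 / (2 * lam)) * 2 = 1 / lam := by field_simp
    have c3 := comb2
    ring_nf at c3 ⊢
    linarith
  have hdiv := le_of_mul_le_mul_left hkey ht0
  have hCN : (1 / (2 * lam)) * t * N = t * C := by rw [hC]; ring
  calc h p ≤ h x' + (1 / lam) * I + (1 / (2 * lam)) * t * N := by linarith
    _ ≤ h x' + (1 / lam) * I + ε := by rw [hCN]; linarith

/-- Summability of gradient-mapping norms: Suppose x* is a minimizer of
F = f + h. Let (x_k) and positive stepsizes (λ_k) satisfy, for every k: the composite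
linesearch condition holds at x_k with stepsize λ_k, λ_k ≥ 1/(3L) for some L > 0, and
x_{k+1} = x_k − λ_k G_{λ_k}(x_k). Then for every T ≥ 0:
Σ_{k=0}^{T} ‖G_{λ_k}(x_k)‖² ≤ 6L (F(x_0) − F(x*)). -/
theorem stmt_13 {d : ℕ} (f h : EuclideanSpace ℝ (Fin d) → ℝ)
    (hf_conv : ConvexOn ℝ Set.univ f) (hf_diff : Differentiable ℝ f)
    (hh_conv : ConvexOn ℝ Set.univ h)
    (xstar : EuclideanSpace ℝ (Fin d))
    (hmin : ∀ y, f xstar + h xstar ≤ f y + h y)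
    (L : ℝ) (hL : 0 < L)
    (x p G : ℕ → EuclideanSpace ℝ (Fin d)) (lam : ℕ → ℝ)
    (hlam_pos : ∀ k, 0 < lam k)
    (hp : ∀ k u, h (p k) + (1 / (2 * lam k)) * ‖p k - (x k - lam k • gradient f (x k))‖ ^ 2 ≤
          h u + (1 / (2 * lam k)) * ‖u - (x k - lam k • gradient f (x k))‖ ^ 2)
    (hG : ∀ k, G k = (lam k)⁻¹ • (x k - p k))
    (hls : ∀ k, f (x k - (2 * lam k) • G k) ≤ f (x k - lam k • G k)
            - lam k * ⟪G k, gradient f (x k)⟫ + (lam k / 2) * ‖G k‖ ^ 2)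
    (hlam_lb : ∀ k, 1 / (3 * L) ≤ lam k)
    (hupd : ∀ k, x (k + 1) = x k - lam k • G k) :
    ∀ T : ℕ, ∑ k ∈ Finset.range (T + 1), ‖G k‖ ^ 2 ≤
      6 * L * ((f (x 0) + h (x 0)) - (f xstar + h xstar)) := by
  -- per-step sufficient decrease
  have key : ∀ k, f (x (k+1)) + h (x (k+1)) + (lam k / 2) * ‖G k‖ ^ 2
      ≤ f (x k) + h (x k) := by
    intro k
    have hlk := hlam_pos k
    have hlk' : lam k ≠ 0 := ne_of_gt hlk
    have hpk : p k = x k - lam k • G k := by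
      rw [hG k, smul_inv_smul₀ hlk']; abel
    -- f bound via convexity midpoint + linesearch
    have hmid : (1/2 : ℝ) • (x k) + (1/2 : ℝ) • (x k - (2 * lam k) • G k)
        = x k - lam k • G k := by
      rw [smul_sub, smul_smul]
      rw [show (1/2 : ℝ) * (2 * lam k) = lam k by ring]
      rw [show ((1:ℝ)/2) • x k + ((1/2 : ℝ) • x k - lam k • G k)
          = ((1:ℝ)/2 + 1/2) • x k - lam k • G k by rw [add_smul]; abel]
      norm_num
    have hconvf := hf_conv.2 (Set.mem_univ (x k))
      (Set.mem_univ (x k - (2 * lam k) • G k))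
      (by norm_num : (0:ℝ) ≤ 1/2) (by norm_num : (0:ℝ) ≤ 1/2) (by norm_num)
    rw [hmid] at hconvf
    simp only [smul_eq_mul] at hconvf
    have hfb : f (x k - lam k • G k) ≤ f (x k) - lam k * ⟪G k, gradient f (x k)⟫
        + (lam k / 2) * ‖G k‖ ^ 2 := by
      have := hls k
      linarith
    -- h bound via strong prox
    have hhb := aux_prox h hh_conv (lam k) hlk (p k)
      (x k - lam k • gradient f (x k)) (x k) (hp k)
    have hinner : ⟪p k - (x k - lam k • gradient f (x k)), x k - p k⟫
        = lam k ^ 2 * (⟪gradient f (x k), G k⟫ - ‖G k‖ ^ 2) := by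
      have e1 : p k - (x k - lam k • gradient f (x k))
          = lam k • (gradient f (x k) - G k) := by
        rw [hpk, smul_sub]; abel
      have e2 : x k - p k = lam k • G k := by rw [hpk]; abel
      rw [e1, e2, real_inner_smul_left, real_inner_smul_right, inner_sub_left,
        real_inner_self_eq_norm_sq]
      ring
    rw [hinner] at hhb
    have hhb2 : h (p k) ≤ h (x k) + lam k * ⟪gradient f (x k), G k⟫ - lam k * ‖G k‖ ^ 2 := by
      have : (1 / lam k) * (lam k ^ 2 * (⟪gradient f (x k), G k⟫ - ‖G k‖ ^ 2))
          = lam k * ⟪gradient f (x k), G k⟫ - lam k * ‖G k‖ ^ 2 := by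
        field_simp
      rw [this] at hhb
      linarith
    rw [real_inner_comm (gradient f (x k)) (G k)] at hfb
    rw [hupd k, ← hpk]
    rw [← hpk] at hfb
    linarith
  -- telescoping
  have main : ∀ n : ℕ, ∑ k ∈ Finset.range n, (lam k / 2) * ‖G k‖ ^ 2
      ≤ (f (x 0) + h (x 0)) - (f (x n) + h (x n)) := by
    intro n
    induction n with
    | zero => simp
    | succ n ih =>
      rw [Finset.sum_range_succ]
      have := key n
      linarith
  intro T
  have h1 : ∑ k ∈ Finset.range (T+1), ‖G k‖ ^ 2
      ≤ ∑ k ∈ Finset.range (T+1), 6 * L * ((lam k / 2) * ‖G k‖ ^ 2) := by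
    apply Finset.sum_le_sum
    intro k _
    have hlb := hlam_lb k
    have h3 : 1 ≤ 3 * L * lam k := by
      rw [div_le_iff₀ (by positivity)] at hlb
      linarith
    nlinarith [sq_nonneg ‖G k‖]
  rw [← Finset.mul_sum] at h1
  have h2 := mul_le_mul_of_nonneg_left (main (T+1)) (by positivity : (0:ℝ) ≤ 6 * L)
  have h3 : f xstar + h xstar ≤ f (x (T+1)) + h (x (T+1)) := hmin _
  have h4 : 6 * L * ((f (x 0) + h (x 0)) - (f (x (T+1)) + h (x (T+1))))
      ≤ 6 * L * ((f (x 0) + h (x 0)) - (f xstar + h xstar)) := by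
    apply mul_le_mul_of_nonneg_left _ (by positivity : (0:ℝ) ≤ 6 * L)
    linarith
  linarith
end

section
/- (Corollary: smooth non-accelerated convergence rate) Let f : ℝ^d → ℝ be convex and differentiable with L-Lipschitz gradient, L > 0, and let x* be a minimizer of f. Let (x_k)_{k≥0} and positive stepsizes (λ_k)_{k≥0} satisfy, for every k: (a) f(x_k − 2λ_k∇f(x_k)) ≤ f(x_k − λ_k∇f(x_k)) − (λ_k/2)‖∇f(x_k)‖², (b) λ_k ≥ 1/(3L), and (c) x_{k+1} = x_k − λ_k ∇f(x_k). Then for every k ≥ 1: f(x_k) − f(x*) ≤ (3L/2)‖x_0 − x*‖² / k. -/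
open RealInnerProductSpace


lemma grad_first_order {d : ℕ} (f : EuclideanSpace ℝ (Fin d) → ℝ)
    (hc : ConvexOn ℝ Set.univ f) (hd : Differentiable ℝ f)
    (x y : EuclideanSpace ℝ (Fin d)) :
    f x + ⟪gradient f x, y - x⟫ ≤ f y := by
  set g : ℝ → ℝ := fun t => f (x + t • (y - x)) with hg
  have hgc : ConvexOn ℝ Set.univ g := by
    have := hc.comp_affineMap (AffineMap.lineMap x y)
    simp only [Set.preimage_univ] at this
    suffices hfun : g = f ∘ ⇑(AffineMap.lineMap (k := ℝ) x y) by rw [hfun]; exact this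
    funext t
    simp only [hg, Function.comp, AffineMap.lineMap_apply_module]
    congr 1
    module
  have hcurve : HasDerivAt (fun t : ℝ => x + t • (y - x)) (y - x) 0 := by
    simpa using ((hasDerivAt_id (0:ℝ)).smul_const (y - x)).const_add x
  have hF : HasFDerivAt f (InnerProductSpace.toDual ℝ _ (gradient f x)) x :=
    hasGradientAt_iff_hasFDerivAt.mp (hd x).hasGradientAt
  have hF' : HasFDerivAt f (InnerProductSpace.toDual ℝ _ (gradient f x)) (x + (0:ℝ) • (y - x)) := by
    simpa using hF
  have hder : HasDerivAt g ⟪gradient f x, y - x⟫ 0 := by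
    have := hF'.comp_hasDerivAt 0 hcurve
    simp at this ⊢
    exact this
  have hsl := hgc.le_slope_of_hasDerivAt (Set.mem_univ (0:ℝ)) (Set.mem_univ (1:ℝ))
    zero_lt_one hder
  have : slope g 0 1 = f y - f x := by
    simp [slope_def_field, hg]
  rw [this] at hsl
  linarith

/-- Corollary: smooth non-accelerated convergence rate: Let f : ℝ^d → ℝ be
convex and differentiable with L-Lipschitz gradient, L > 0, and let x* be a minimizer of
f. Let (x_k) and positive stepsizes (λ_k) satisfy, for every k:
(a) f(x_k − 2λ_k∇f(x_k)) ≤ f(x_k − λ_k∇f(x_k)) − (λ_k/2)‖∇f(x_k)‖², (b) λ_k ≥ 1/(3L),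
and (c) x_{k+1} = x_k − λ_k ∇f(x_k). Then for every k ≥ 1:
f(x_k) − f(x*) ≤ (3L/2)‖x_0 − x*‖² / k. -/
theorem stmt_14 {d : ℕ} (f : EuclideanSpace ℝ (Fin d) → ℝ)
    (hf_conv : ConvexOn ℝ Set.univ f) (hf_diff : Differentiable ℝ f)
    (L : ℝ) (hL : 0 < L)
    (hf_lip : ∀ a b, ‖gradient f a - gradient f b‖ ≤ L * ‖a - b‖)
    (xstar : EuclideanSpace ℝ (Fin d))
    (hmin : ∀ y, f xstar ≤ f y)
    (x : ℕ → EuclideanSpace ℝ (Fin d)) (lam : ℕ → ℝ)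
    (hlam_pos : ∀ k, 0 < lam k)
    (hls : ∀ k, f (x k - (2 * lam k) • gradient f (x k)) ≤
            f (x k - lam k • gradient f (x k)) - (lam k / 2) * ‖gradient f (x k)‖ ^ 2)
    (hlam_lb : ∀ k, 1 / (3 * L) ≤ lam k)
    (hupd : ∀ k, x (k + 1) = x k - lam k • gradient f (x k)) :
    ∀ k : ℕ, 1 ≤ k →
      f (x k) - f xstar ≤ (3 * L / 2) * ‖x 0 - xstar‖ ^ 2 / (k : ℝ) := by
  set g : ℕ → EuclideanSpace ℝ (Fin d) := fun k => gradient f (x k) with hgdef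
  set δ : ℕ → ℝ := fun k => f (x k) - f xstar with hδdef
  set r : ℕ → ℝ := fun k => ‖x k - xstar‖ with hrdef
  -- Step 1: descent
  have hdesc : ∀ k, f (x (k+1)) ≤ f (x k) - (lam k / 2) * ‖g k‖ ^ 2 := by
    intro k
    have hmid : x k - lam k • g k =
        (1/2 : ℝ) • (x k) + (1/2 : ℝ) • (x k - (2 * lam k) • g k) := by
      module
    have hconv2 := hf_conv.2 (Set.mem_univ (x k)) (Set.mem_univ (x k - (2 * lam k) • g k))
      (by norm_num : (0:ℝ) ≤ 1/2) (by norm_num : (0:ℝ) ≤ 1/2) (by norm_num)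
    rw [← hmid] at hconv2
    simp only [smul_eq_mul] at hconv2
    have hls' := hls k
    rw [hupd k]
    simp only [hgdef] at *
    linarith
  have hδnonneg : ∀ k, 0 ≤ δ k := fun k => by simp [hδdef, sub_nonneg, hmin]
  -- Step 2: key per-step bound
  have hkey : ∀ k, lam k * δ (k+1) ≤ (r k ^ 2 - r (k+1) ^ 2) / 2 := by
    intro k
    have hfo := grad_first_order f hf_conv hf_diff (x k) xstar
    have hnorm : r (k+1) ^ 2 = r k ^ 2 - 2 * (lam k * ⟪x k - xstar, g k⟫)
        + lam k ^ 2 * ‖g k‖ ^ 2 := by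
      have h1 : x (k+1) - xstar = (x k - xstar) - lam k • g k := by
        rw [hupd k]; module
      simp only [hrdef, h1]
      rw [norm_sub_sq_real, real_inner_smul_right, norm_smul]
      rw [Real.norm_eq_abs, mul_pow, sq_abs]
    have hinner : ⟪g k, xstar - x k⟫ = - ⟪x k - xstar, g k⟫ := by
      rw [real_inner_comm]
      rw [show xstar - x k = -(x k - xstar) by abel, inner_neg_left]
    have hconv : δ k ≤ ⟪x k - xstar, g k⟫ := by
      simp only [hδdef]
      rw [hgdef] at hinner
      linarith [hfo, hinner]
    have hd := hdesc k
    have hδ1 : δ (k+1) ≤ δ k - (lam k / 2) * ‖g k‖ ^ 2 := by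
      simp only [hδdef]; linarith
    have hlp := hlam_pos k
    nlinarith [mul_le_mul_of_nonneg_left hδ1 hlp.le,
      mul_le_mul_of_nonneg_left hconv hlp.le, sq_nonneg (lam k), sq_nonneg ‖g k‖]
  -- per-step bound with constant
  have hstep : ∀ k, δ (k+1) ≤ (3 * L / 2) * (r k ^ 2 - r (k+1) ^ 2) := by
    intro k
    have h1 : 1 ≤ 3 * L * lam k := by
      have := hlam_lb k
      rw [div_le_iff₀ (by positivity)] at this
      linarith [this]
    have h2 : δ (k+1) ≤ 3 * L * (lam k * δ (k+1)) := by
      nlinarith [hδnonneg (k+1)]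
    have h3 := hkey k
    calc δ (k+1) ≤ 3 * L * (lam k * δ (k+1)) := h2
      _ ≤ 3 * L * ((r k ^ 2 - r (k+1) ^ 2) / 2) :=
          mul_le_mul_of_nonneg_left h3 (by positivity)
      _ = 3 * L / 2 * (r k ^ 2 - r (k+1) ^ 2) := by ring
  -- Monotonicity of δ
  have hmono : ∀ m n : ℕ, m ≤ n → δ n ≤ δ m := by
    intro m n hmn
    induction n with
    | zero => simp_all
    | succ p ih =>
      rcases Nat.lt_or_ge m (p+1) with h | h
      · have := ih (Nat.lt_succ_iff.mp h)
        have hd := hdesc p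
        have : δ (p+1) ≤ δ p := by
          simp only [hδdef]
          nlinarith [sq_nonneg ‖g p‖, (hlam_pos p).le]
        linarith [ih (Nat.lt_succ_iff.mp h)]
      · have : m = p + 1 := le_antisymm hmn h
        simp [this]
  -- Telescoping sum
  have hsum : ∀ K : ℕ, ∑ k ∈ Finset.range K, δ (k+1) ≤ (3 * L / 2) * r 0 ^ 2 := by
    intro K
    calc ∑ k ∈ Finset.range K, δ (k+1)
        ≤ ∑ k ∈ Finset.range K, (3 * L / 2) * (r k ^ 2 - r (k+1) ^ 2) :=
          Finset.sum_le_sum fun k _ => hstep k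
      _ = (3 * L / 2) * ∑ k ∈ Finset.range K, (r k ^ 2 - r (k+1) ^ 2) := by
          rw [Finset.mul_sum]
      _ = (3 * L / 2) * (r 0 ^ 2 - r K ^ 2) := by
          rw [Finset.sum_range_sub' (fun k => r k ^ 2)]
      _ ≤ (3 * L / 2) * r 0 ^ 2 := by nlinarith [sq_nonneg (r K)]
  intro k hk
  have hlow : (k : ℝ) * δ k ≤ ∑ j ∈ Finset.range k, δ (j+1) := by
    have : ∀ j ∈ Finset.range k, δ k ≤ δ (j+1) := by
      intro j hj
      exact hmono (j+1) k (Finset.mem_range.mp hj)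
    calc (k : ℝ) * δ k = ∑ _j ∈ Finset.range k, δ k := by
          simp [Finset.sum_const, mul_comm]
      _ ≤ ∑ j ∈ Finset.range k, δ (j+1) := Finset.sum_le_sum this
  have hkpos : (0:ℝ) < (k:ℝ) := by exact_mod_cast hk
  show δ k ≤ (3 * L / 2) * r 0 ^ 2 / (k:ℝ)
  rw [le_div_iff₀ hkpos]
  calc δ k * k = (k:ℝ) * δ k := by ring
    _ ≤ ∑ j ∈ Finset.range k, δ (j+1) := hlow
    _ ≤ (3 * L / 2) * r 0 ^ 2 := hsum k
end

section
/- (One-step Lyapunov decrease, accelerated case) Let x* be a minimizer of F = f + h and write δ(y) = F(y) − F(x*). Fix reals β_k ≥ 1, β_{k+1} > 0, β_{k-1} with β_{k-1}² = β_k² − β_k, and stepsizes 0 < λ_k ≤ λ_{k-1}. Given points x_k, y_k ∈ ℝ^d, suppose the composite linesearch condition holds at x_k with stepsize λ_k, and define y_{k+1} = x_k − λ_k G_{λ_k}(x_k) and x_{k+1} = ((β_k + β_{k+1} − 1)/β_{k+1}) y_{k+1} + ((1 − β_k)/β_{k+1}) y_k. Writing u_k = β_k x_k − (β_k − 1) y_k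 − x* and u_{k+1} = β_{k+1} x_{k+1} − (β_{k+1} − 1) y_{k+1} − x*, one has λ_k β_k² δ(y_{k+1}) + (1/2)‖u_{k+1}‖² ≤ λ_{k-1} β_{k-1}² δ(y_k) + (1/2)‖u_k‖². -/
open RealInnerProductSpace


lemma prox_subgrad_s18 {E : Type*} [NormedAddCommGroup E] [InnerProductSpace ℝ E]
    {h : E → ℝ} (hh : ConvexOn ℝ Set.univ h) {lam : ℝ} (hlam : 0 < lam)
    {p v : E}
    (hp : ∀ u, h p + (1/(2*lam)) * ‖p - v‖^2 ≤ h u + (1/(2*lam)) * ‖u - v‖^2)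
    (z : E) : ⟪v - p, z - p⟫ ≤ lam * (h z - h p) := by
  set I : ℝ := ⟪p - v, z - p⟫ with hI
  set N : ℝ := ‖z - p‖^2 with hN
  have hNnn : 0 ≤ N := by positivity
  have hvp : ⟪v - p, z - p⟫ = -I := by
    rw [hI, ← inner_neg_left]; congr 1; abel
  have key : ∀ t : ℝ, 0 < t → t ≤ 1 →
      2 * lam * (h p - h z) ≤ 2 * I + t * N := by
    intro t ht ht1
    have hu := hp ((1 - t) • p + t • z)
    have hconv := hh.2 (Set.mem_univ p) (Set.mem_univ z)
      (by linarith : (0:ℝ) ≤ 1 - t) (le_of_lt ht) (by ring)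
    simp only [smul_eq_mul] at hconv
    have hexp : ‖(1 - t) • p + t • z - v‖^2 = ‖p - v‖^2 + 2*t*I + t^2 * N := by
      have he : (1 - t) • p + t • z - v = (p - v) + t • (z - p) := by module
      rw [he, norm_add_sq_real, real_inner_smul_right, norm_smul, mul_pow, hI, hN, Real.norm_eq_abs, sq_abs]
      ring
    rw [hexp] at hu
    have h1 : h p ≤ (1-t)*h p + t*h z + (1/(2*lam))*(2*t*I + t^2*N) := by nlinarith [hu, hconv]
    have h2 : t * (2*lam*(h p - h z)) ≤ t * (2*I + t*N) := by
      have h2l : (0:ℝ) < 2*lam := by linarith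
      have := mul_le_mul_of_nonneg_left h1 (le_of_lt h2l)
      have hc : 2*lam*((1/(2*lam))*(2*t*I + t^2*N)) = 2*t*I + t^2*N := by
        field_simp
      nlinarith [this, hc]
    exact le_of_mul_le_mul_left h2 ht
  have main : 2 * lam * (h p - h z) ≤ 2 * I := by
    have : ∀ ε > (0:ℝ), 2 * lam * (h p - h z) ≤ 2 * I + ε := by
      intro ε hε
      have hd : 0 < ε / (N + 1) := by positivity
      set t : ℝ := min 1 (ε / (N + 1)) with htdef
      have ht : 0 < t := lt_min one_pos hd
      have ht1 : t ≤ 1 := min_le_left _ _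
      have htN : t * N ≤ ε := by
        have h3 : t ≤ ε / (N + 1) := min_le_right _ _
        have : t * N ≤ (ε / (N + 1)) * N := by nlinarith
        have h4 : (ε / (N + 1)) * N ≤ ε := by
          rw [div_mul_eq_mul_div, div_le_iff₀ (by linarith)]
          nlinarith
        linarith
      linarith [key t ht ht1]
    exact le_of_forall_pos_le_add this
  rw [hvp]; linarith

lemma grad_ineq_s18 {E : Type*} [NormedAddCommGroup E] [InnerProductSpace ℝ E] [CompleteSpace E]
    {f : E → ℝ} (hconv : ConvexOn ℝ Set.univ f) (hdiff : Differentiable ℝ f)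
    (x z : E) : f x + ⟪gradient f x, z - x⟫ ≤ f z := by
  have hfd : HasFDerivAt f ((InnerProductSpace.toDual ℝ E) (gradient f x)) x :=
    (hdiff x).hasGradientAt.hasFDerivAt
  have hcurve : HasDerivAt (fun t : ℝ => x + t • (z - x)) (z - x) 0 := by
    simpa using ((hasDerivAt_id (0:ℝ)).smul_const (z - x)).const_add x
  have hg : HasDerivAt (fun t : ℝ => f (x + t • (z - x))) ⟪gradient f x, z - x⟫ 0 := by
    have hfd' : HasFDerivAt f ((InnerProductSpace.toDual ℝ E) (gradient f x)) (x + (0:ℝ) • (z-x)) := by simpa using hfd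
    have := hfd'.comp_hasDerivAt 0 hcurve
    simpa [InnerProductSpace.toDual_apply_apply, Function.comp_def] using this
  have hgconv : ConvexOn ℝ Set.univ (fun t : ℝ => f (x + t • (z - x))) := by
    have := hconv.comp_affineMap (AffineMap.lineMap x z : ℝ →ᵃ[ℝ] E)
    have heq : (fun t : ℝ => f (x + t • (z - x))) =
        f ∘ (AffineMap.lineMap x z : ℝ →ᵃ[ℝ] E) := by
      funext t; simp [AffineMap.lineMap_apply, add_comm]
    rw [heq]
    simpa using this
  have := hgconv.le_slope_of_hasDerivAt (Set.mem_univ (0:ℝ)) (Set.mem_univ (1:ℝ))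
    one_pos hg
  rw [slope_def_field] at this
  simp only [zero_smul, add_zero, one_smul] at this hg
  have h1 : f (x + (z - x)) = f z := by congr 1; abel
  rw [h1] at this
  have : ⟪gradient f x, z - x⟫ ≤ (f z - f x) / (1 - 0) := this
  simp at this
  linarith


set_option maxHeartbeats 1000000 in
/-- One-step Lyapunov decrease, accelerated case: Let x* be a minimizer of
F = f + h and write δ(y) = F(y) − F(x*). Fix reals β_k ≥ 1, β_{k+1} > 0, β_{k-1} with
β_{k-1}² = β_k² − β_k, and stepsizes 0 < λ_k ≤ λ_{k-1}. Given points x_k, y_k, suppose the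
composite linesearch condition holds at x_k with stepsize λ_k, and define
y_{k+1} = x_k − λ_k G_{λ_k}(x_k) and
x_{k+1} = ((β_k + β_{k+1} − 1)/β_{k+1}) y_{k+1} + ((1 − β_k)/β_{k+1}) y_k. Writing
u_k = β_k x_k − (β_k − 1) y_k − x* and u_{k+1} = β_{k+1} x_{k+1} − (β_{k+1} − 1) y_{k+1} − x*,
one has λ_k β_k² δ(y_{k+1}) + (1/2)‖u_{k+1}‖² ≤ λ_{k-1} β_{k-1}² δ(y_k) + (1/2)‖u_k‖². -/
theorem stmt_18 {d : ℕ} (f h : EuclideanSpace ℝ (Fin d) → ℝ)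
    (hf_conv : ConvexOn ℝ Set.univ f) (hf_diff : Differentiable ℝ f)
    (hh_conv : ConvexOn ℝ Set.univ h)
    (xstar : EuclideanSpace ℝ (Fin d))
    (hmin : ∀ y, f xstar + h xstar ≤ f y + h y)
    (betak betak1 betakm : ℝ) (hbk : 1 ≤ betak) (hbk1 : 0 < betak1)
    (hbm : betakm ^ 2 = betak ^ 2 - betak)
    (lamk lamkm : ℝ) (hlamk : 0 < lamk) (hlamle : lamk ≤ lamkm)
    (xk yk p G yk1 xk1 uk uk1 : EuclideanSpace ℝ (Fin d))
    (hp : ∀ u, h p + (1 / (2 * lamk)) * ‖p - (xk - lamk • gradient f xk)‖ ^ 2 ≤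
          h u + (1 / (2 * lamk)) * ‖u - (xk - lamk • gradient f xk)‖ ^ 2)
    (hG : G = lamk⁻¹ • (xk - p))
    (hls : f (xk - (2 * lamk) • G) ≤ f (xk - lamk • G)
            - lamk * ⟪G, gradient f xk⟫ + (lamk / 2) * ‖G‖ ^ 2)
    (hy : yk1 = xk - lamk • G)
    (hx : xk1 = ((betak + betak1 - 1) / betak1) • yk1 + ((1 - betak) / betak1) • yk)
    (hu : uk = betak • xk - (betak - 1) • yk - xstar)
    (hu1 : uk1 = betak1 • xk1 - (betak1 - 1) • yk1 - xstar) :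
    lamk * betak ^ 2 * ((f yk1 + h yk1) - (f xstar + h xstar)) + (1 / 2) * ‖uk1‖ ^ 2 ≤
    lamkm * betakm ^ 2 * ((f yk + h yk) - (f xstar + h xstar)) + (1 / 2) * ‖uk‖ ^ 2 := by
  have hlne : lamk ≠ 0 := ne_of_gt hlamk
  have hb1 : betak1 ≠ 0 := ne_of_gt hbk1
  have hxp : xk - p = lamk • G := by
    rw [hG, smul_smul]; field_simp; rw [one_smul]
  have hxG : xk - lamk • G = p := by rw [← hxp]; abel
  have hyp : yk1 = p := by rw [hy, hxG]
  -- descent inequality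
  have hmid : f (xk - lamk • G) ≤ (1/2) * f xk + (1/2) * f (xk - (2*lamk) • G) := by
    have h0 := hf_conv.2 (Set.mem_univ xk) (Set.mem_univ (xk - (2*lamk) • G))
      (by norm_num : (0:ℝ) ≤ 1/2) (by norm_num : (0:ℝ) ≤ 1/2) (by norm_num)
    have he : (1/2:ℝ) • xk + (1/2:ℝ) • (xk - (2*lamk) • G) = xk - lamk • G := by module
    rw [he] at h0
    simpa using h0
  rw [hxG] at hmid
  rw [hxG] at hls
  have hdesc : f p ≤ f xk - lamk * ⟪G, gradient f xk⟫ + (lamk/2) * ‖G‖^2 := by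
    linarith
  -- inner product identities
  have e1 : ⟪G, xk - p⟫ = lamk * ‖G‖^2 := by
    rw [hxp, real_inner_smul_right, real_inner_self_eq_norm_sq]
  have e2 : ⟪gradient f xk, xk - p⟫ = lamk * ⟪G, gradient f xk⟫ := by
    rw [hxp, real_inner_smul_right, real_inner_comm]
  simp only [inner_sub_right] at e1 e2
  -- key inequality
  have key : ∀ z, f p + h p ≤ f z + h z + (⟪G, xk⟫ - ⟪G, z⟫) - (lamk/2) * ‖G‖^2 := by
    intro z
    have hgz := grad_ineq_s18 hf_conv hf_diff xk z
    have hsub := prox_subgrad_s18 hh_conv hlamk hp z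
    have hvp : (xk - lamk • gradient f xk) - p = lamk • (G - gradient f xk) := by
      rw [smul_sub, ← hxp]; abel
    rw [hvp, real_inner_smul_left] at hsub
    have hsub2 : ⟪G - gradient f xk, z - p⟫ ≤ h z - h p :=
      le_of_mul_le_mul_left (by linarith) hlamk
    simp only [inner_sub_left, inner_sub_right] at hsub2 hgz
    linarith
  have Ky := key yk
  have Kx := key xstar
  -- u recursion
  have huk1 : uk1 = uk - (lamk * betak) • G := by
    rw [hu1, hx, hu, hy]
    match_scalars <;> field_simp <;> ring
  have hnorm : ‖uk1‖^2 = ‖uk‖^2 - 2*(lamk*betak)*⟪uk, G⟫ + (lamk*betak)^2*‖G‖^2 := by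
    rw [huk1, norm_sub_sq_real, real_inner_smul_right, norm_smul, mul_pow,
      Real.norm_eq_abs, sq_abs]
    ring
  have hGu : ⟪uk, G⟫ = betak*⟪G, xk⟫ - (betak-1)*⟪G, yk⟫ - ⟪G, xstar⟫ := by
    rw [real_inner_comm, hu]
    simp only [inner_sub_right, real_inner_smul_right]
  have Bnn : 0 ≤ (f yk + h yk) - (f xstar + h xstar) := by linarith [hmin yk]
  have hbmn : 0 ≤ betak^2 - betak := hbm ▸ sq_nonneg betakm
  have H1 := mul_le_mul_of_nonneg_left Ky
    (by nlinarith : (0:ℝ) ≤ lamk * betak * (betak - 1))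
  have H2 := mul_le_mul_of_nonneg_left Kx
    (by nlinarith : (0:ℝ) ≤ lamk * betak)
  have H3 : 0 ≤ (lamkm - lamk) * (betak^2 - betak) * ((f yk + h yk) - (f xstar + h xstar)) :=
    mul_nonneg (mul_nonneg (by linarith) hbmn) Bnn
  rw [hyp, hnorm, hGu, hbm]
  nlinarith [H1, H2, H3]
end
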